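/- The total number of φ-monotone paths on the cross-polytope ◇^n equals (2^{2n−1} − 2)/3. -/

import Mathlib

open scoped BigOperators

/-- The `i`-th standard basis vector of `ℝ^n`. -/
noncomputable def stdVec (n : ℕ) (i : Fin n) : Fin n → ℝ := Pi.single i 1

/-- The last standard basis vector `e_n` of `ℝ^{n+2}`. -/
noncomputable def lastVec (n : ℕ) : Fin (n + 2) → ℝ := stdVec (n + 2) (Fin.last (n + 1))

/-- The linear functional `φ(x) = ∑ i, a i * x i`. -/
def phi (n : ℕ) (a : Fin (n + 2) → ℝ) (x : Fin (n + 2) → ℝ) : ℝ := ∑ i, a i * x i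

/-- A vertex of the cross-polytope `◇^n`: one of the `2n` points `±e_i`. -/
def IsCPVertex (n : ℕ) (x : Fin n → ℝ) : Prop :=
  ∃ i : Fin n, x = stdVec n i ∨ x = -stdVec n i

/-- The cross-polytope `◇^n = conv{±e_1, …, ±e_n}`. -/
noncomputable def crossPoly (n : ℕ) : Set (Fin n → ℝ) :=
  convexHull ℝ {x | IsCPVertex n x}

/-- A `φ`-monotone path on `◇^{n+2}`, encoded as the list of its vertices:
it starts at `-e_n`, ends at `e_n`, visits only vertices, is strictly `φ`-increasing,
and consecutive vertices are not antipodal. -/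
def IsMonoPath (n : ℕ) (a : Fin (n + 2) → ℝ) (l : List (Fin (n + 2) → ℝ)) : Prop :=
  l.head? = some (-lastVec n) ∧
  l.getLast? = some (lastVec n) ∧
  (∀ v ∈ l, IsCPVertex (n + 2) v) ∧
  l.Chain' (fun u v => phi n a u < phi n a v ∧ v ≠ -u)

/-- A monotone path is combinatorially coherent if no antipodal pair `±e_j`
(`j ∈ {1, …, n-1}`) occurs among its interior vertices. -/
def CombCoherent (n : ℕ) (l : List (Fin (n + 2) → ℝ)) : Prop :=
  ¬ ∃ j : Fin (n + 1), stdVec (n + 2) j.castSucc ∈ l.tail.dropLast ∧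
      -stdVec (n + 2) j.castSucc ∈ l.tail.dropLast

/-- The Billera–Sturmfels point `p(γ)` associated to a monotone path. -/
noncomputable def pathPoint (n : ℕ) (a : Fin (n + 2) → ℝ) (l : List (Fin (n + 2) → ℝ)) :
    Fin (n + 2) → ℝ :=
  ((l.zip l.tail).map fun q =>
    ((phi n a q.2 - phi n a q.1) / (4 * a (Fin.last (n + 1)))) • (q.1 + q.2)).sum

/-- The monotone path polytope `MPP_φ(◇^{n+2})`. -/
noncomputable def MPP (n : ℕ) (a : Fin (n + 2) → ℝ) : Set (Fin (n + 2) → ℝ) :=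
  convexHull ℝ {x | ∃ l, IsMonoPath n a l ∧ x = pathPoint n a l}

open Classical in
/-- The sign vector `σ(γ) ∈ {-1,0,1}^{n+1}` of a monotone path. -/
noncomputable def sigmaVec (n : ℕ) (l : List (Fin (n + 2) → ℝ)) : Fin (n + 1) → ℤ :=
  fun j =>
    if stdVec (n + 2) j.castSucc ∈ l then 1
    else if -stdVec (n + 2) j.castSucc ∈ l then -1 else 0

/-!
Since `0 < a₁ < ⋯ < aₙ`, `φ` orders the vertices as `-eₙ < ⋯ < -e₁ < e₁ < ⋯ < eₙ`. A monotone
path is therefore the increasing enumeration of its vertex set, which consists of `±eₙ` and an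
arbitrary set of the other `±eⱼ`. The only place where two consecutive vertices can be antipodal
is where the path passes from negative to positive vertices, from `-eᵢ` to `eⱼ` with `i` and `j`
the smallest indices of a negative and of a positive vertex; so the path is valid iff `i ≠ j`.
Recording for each `j < n` which of `±eⱼ` are visited, the number `G m` of valid patterns on `m`
indices satisfies `G 0 = 0` and `G (m + 1) = G m + 2 · 4 ^ m` (look at the index `0`: both absent
reduces to `m` indices, exactly one present is always valid, both present never), so
`3 G m = 2 · 4 ^ m - 2`.
-/

/-- `s j` records whether `-eⱼ` and `eⱼ` are visited. `Fin.find?` gives the smallest index of a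
visited negative and of a visited positive vertex, `none` standing for the last index: if both are
`none`, the path is the antipodal step `-eₙ → eₙ`. -/
def Admissible {m : ℕ} (s : Fin m → Bool × Bool) : Prop :=
  Fin.find? (fun j => (s j).1) ≠ Fin.find? (fun j => (s j).2)

instance {m : ℕ} : DecidablePred (@Admissible m) := fun _ => instDecidableNot

theorem admissible_cons {m : ℕ} (b : Bool × Bool) (t : Fin m → Bool × Bool) :
    Admissible (Fin.cons b t : Fin (m + 1) → Bool × Bool) ↔
      b.1 ≠ b.2 ∨ b = (false, false) ∧ Admissible t := by
  obtain ⟨_ | _, _ | _⟩ := b <;>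
    simp [Admissible, Fin.find?_succ, (Option.map_injective (Fin.succ_injective _)).ne_iff]

theorem card_admissible_succ (m : ℕ) :
    Fintype.card {s : Fin (m + 1) → Bool × Bool // Admissible s} =
      Fintype.card {t : Fin m → Bool × Bool // Admissible t} + 2 * 4 ^ m := by
  let P (b : Bool × Bool) (t : Fin m → Bool × Bool) : Prop :=
    Admissible (Fin.cons b t : Fin (m + 1) → Bool × Bool)
  rw [← Fintype.card_congr ((Fin.consEquiv fun _ => Bool × Bool).subtypeEquiv
      (p := fun bt => P bt.1 bt.2) fun _ => Iff.rfl),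
    Fintype.card_congr (Equiv.subtypeProdEquivSigmaSubtype P), Fintype.card_sigma]
  simp [P, admissible_cons, Fintype.sum_prod_type]
  ring

theorem card_admissible (m : ℕ) :
    3 * Fintype.card {s : Fin m → Bool × Bool // Admissible s} + 2 = 2 * 4 ^ m := by
  induction m with
  | zero => simp [Admissible]
  | succ m ih => rw [card_admissible_succ, pow_succ]; omega

section IdxList

variable {m : ℕ}

def idxList (p : Fin m → Bool) : List (Fin (m + 1)) :=
  ((List.finRange m).filter p).map Fin.castSucc ++ [Fin.last m]

def firstIdx (p : Fin m → Bool) : Fin (m + 1) :=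
  ((Fin.find? p).map Fin.castSucc).getD (Fin.last m)

theorem pairwise_lt_idxList (p : Fin m → Bool) : (idxList p).Pairwise (· < ·) := by
  rw [idxList, List.pairwise_append]
  refine ⟨((List.pairwise_lt_finRange m).sublist List.filter_sublist).map _
    fun _ _ => Fin.castSucc_lt_castSucc_iff.2, List.pairwise_singleton _ _, ?_⟩
  simp [Fin.castSucc_lt_last]

theorem last_mem_idxList (p : Fin m → Bool) : Fin.last m ∈ idxList p := by
  simp [idxList]

theorem castSucc_mem_idxList (p : Fin m → Bool) (j : Fin m) :
    j.castSucc ∈ idxList p ↔ p j := by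
  simp [idxList, Fin.castSucc_ne_last]

theorem head?_idxList (p : Fin m → Bool) : (idxList p).head? = some (firstIdx p) := by
  cases h : Fin.find? p <;> simp_all [idxList, firstIdx, Fin.find?_eq_find?_finRange]

theorem getLast?_idxList (p : Fin m → Bool) : (idxList p).getLast? = some (Fin.last m) := by
  simp [idxList]

theorem firstIdx_eq_firstIdx_iff (p q : Fin m → Bool) :
    firstIdx p = firstIdx q ↔ Fin.find? p = Fin.find? q := by
  unfold firstIdx
  cases Fin.find? p <;> cases Fin.find? q <;>
    simp [Fin.castSucc_ne_last, (Fin.castSucc_ne_last _).symm]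

end IdxList

section Vertices

variable {n : ℕ}

theorem stdVec_injective : Function.Injective (stdVec n) := fun i j h => by
  by_contra hij
  simpa [stdVec, hij] using congrFun h i

theorem stdVec_ne_neg_stdVec (i j : Fin n) : stdVec n i ≠ -stdVec n j := fun h => by
  have := congrFun h i
  by_cases hij : i = j <;> simp [stdVec, hij] at this
  norm_num at this

theorem phi_stdVec (a : Fin (n + 2) → ℝ) (i : Fin (n + 2)) :
    phi n a (stdVec (n + 2) i) = a i := by
  simp [phi, stdVec, Pi.single_apply]

theorem phi_neg (a x : Fin (n + 2) → ℝ) : phi n a (-x) = -phi n a x := by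
  simp [phi]

end Vertices

section Paths

variable {n : ℕ} {a : Fin (n + 2) → ℝ}

noncomputable def pathOf (s : Fin (n + 1) → Bool × Bool) : List (Fin (n + 2) → ℝ) :=
  (idxList fun j => (s j).1).reverse.map (fun i => -stdVec (n + 2) i) ++
    (idxList fun j => (s j).2).map (stdVec (n + 2))

theorem neg_stdVec_mem_pathOf (s : Fin (n + 1) → Bool × Bool) (i : Fin (n + 2)) :
    -stdVec (n + 2) i ∈ pathOf s ↔ i ∈ idxList fun j => (s j).1 := by
  simp [pathOf, stdVec_injective.eq_iff, stdVec_ne_neg_stdVec]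

theorem stdVec_mem_pathOf (s : Fin (n + 1) → Bool × Bool) (i : Fin (n + 2)) :
    stdVec (n + 2) i ∈ pathOf s ↔ i ∈ idxList fun j => (s j).2 := by
  simp [pathOf, stdVec_injective.eq_iff, (stdVec_ne_neg_stdVec _ _).symm]

theorem isCPVertex_of_mem_pathOf {s : Fin (n + 1) → Bool × Bool} {v : Fin (n + 2) → ℝ}
    (hv : v ∈ pathOf s) : IsCPVertex (n + 2) v := by
  simp only [pathOf, List.mem_append, List.mem_map] at hv
  obtain ⟨i, -, rfl⟩ | ⟨i, -, rfl⟩ := hv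
  exacts [⟨i, .inr rfl⟩, ⟨i, .inl rfl⟩]

theorem head?_pathOf (s : Fin (n + 1) → Bool × Bool) : (pathOf s).head? = some (-lastVec n) := by
  simp [pathOf, getLast?_idxList, lastVec]

theorem getLast?_pathOf (s : Fin (n + 1) → Bool × Bool) :
    (pathOf s).getLast? = some (lastVec n) := by
  simp [pathOf, getLast?_idxList, lastVec]

theorem pairwise_neg_stdVec (ha : StrictMono a) (p : Fin (n + 1) → Bool) :
    ((idxList p).reverse.map fun i => -stdVec (n + 2) i).Pairwise
      (fun u v => phi n a u < phi n a v ∧ v ≠ -u) := by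
  rw [List.pairwise_map, List.pairwise_reverse]
  exact (pairwise_lt_idxList p).imp fun hij =>
    ⟨by simpa [phi_neg, phi_stdVec] using ha hij,
      fun h => stdVec_ne_neg_stdVec _ _ (by simpa using h.symm)⟩

theorem pairwise_stdVec (ha : StrictMono a) (p : Fin (n + 1) → Bool) :
    ((idxList p).map (stdVec (n + 2))).Pairwise
      (fun u v => phi n a u < phi n a v ∧ v ≠ -u) := by
  rw [List.pairwise_map]
  exact (pairwise_lt_idxList p).imp fun hij =>
    ⟨by simpa [phi_stdVec] using ha hij, stdVec_ne_neg_stdVec _ _⟩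

theorem phi_neg_stdVec_lt_phi_stdVec (h0 : 0 < a 0) (ha : StrictMono a) (i j : Fin (n + 2)) :
    phi n a (-stdVec (n + 2) i) < phi n a (stdVec (n + 2) j) := by
  have hpos (k : Fin (n + 2)) : 0 < a k := h0.trans_le (ha.monotone (Fin.zero_le k))
  rw [phi_neg, phi_stdVec, phi_stdVec]
  linarith [hpos i, hpos j]

theorem pairwise_phi_lt_pathOf (h0 : 0 < a 0) (ha : StrictMono a)
    (s : Fin (n + 1) → Bool × Bool) :
    (pathOf s).Pairwise (fun u v => phi n a u < phi n a v) := by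
  refine List.pairwise_append.2 ⟨(pairwise_neg_stdVec ha _).imp And.left,
    (pairwise_stdVec ha _).imp And.left, ?_⟩
  simp only [List.mem_map]
  rintro _ ⟨i, -, rfl⟩ _ ⟨j, -, rfl⟩
  exact phi_neg_stdVec_lt_phi_stdVec h0 ha i j

theorem isChain_pathOf_iff (h0 : 0 < a 0) (ha : StrictMono a) (s : Fin (n + 1) → Bool × Bool) :
    (pathOf s).IsChain (fun u v => phi n a u < phi n a v ∧ v ≠ -u) ↔ Admissible s := by
  rw [pathOf, List.isChain_append, Admissible, Ne, ← firstIdx_eq_firstIdx_iff]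
  simp only [(pairwise_neg_stdVec ha _).isChain, (pairwise_stdVec ha _).isChain, true_and,
    List.getLast?_map, List.getLast?_reverse, List.head?_map, head?_idxList, Option.map_some,
    Option.mem_def, Option.some.injEq, forall_eq', neg_neg,
    phi_neg_stdVec_lt_phi_stdVec h0 ha, stdVec_injective.ne_iff]
  exact ne_comm

theorem isMonoPath_pathOf_iff (h0 : 0 < a 0) (ha : StrictMono a)
    {s : Fin (n + 1) → Bool × Bool} :
    IsMonoPath n a (pathOf s) ↔ Admissible s :=
  ⟨fun h => (isChain_pathOf_iff h0 ha s).1 h.2.2.2, fun h => ⟨head?_pathOf s, getLast?_pathOf s,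
    fun _ => isCPVertex_of_mem_pathOf, (isChain_pathOf_iff h0 ha s).2 h⟩⟩

theorem pathOf_injective : Function.Injective (pathOf (n := n)) := fun s t h => by
  funext j
  have h₁ := neg_stdVec_mem_pathOf s j.castSucc
  have h₂ := stdVec_mem_pathOf s j.castSucc
  rw [h, neg_stdVec_mem_pathOf, castSucc_mem_idxList, castSucc_mem_idxList] at h₁
  rw [h, stdVec_mem_pathOf, castSucc_mem_idxList, castSucc_mem_idxList] at h₂
  exact Prod.ext (Bool.eq_iff_iff.2 h₁.symm) (Bool.eq_iff_iff.2 h₂.symm)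

end Paths

section Decoding

variable {n : ℕ} {a : Fin (n + 2) → ℝ}

open Classical in
noncomputable def signsOf (l : List (Fin (n + 2) → ℝ)) : Fin (n + 1) → Bool × Bool :=
  fun j => (decide (-stdVec (n + 2) j.castSucc ∈ l), decide (stdVec (n + 2) j.castSucc ∈ l))

theorem mem_pathOf_signsOf_iff {l : List (Fin (n + 2) → ℝ)} (hfirst : -lastVec n ∈ l)
    (hlast : lastVec n ∈ l) {v : Fin (n + 2) → ℝ} (hv : IsCPVertex (n + 2) v) :
    v ∈ pathOf (signsOf l) ↔ v ∈ l := by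
  obtain ⟨i, rfl | rfl⟩ := hv <;> induction i using Fin.lastCases <;>
    simp_all [stdVec_mem_pathOf, neg_stdVec_mem_pathOf, last_mem_idxList, castSucc_mem_idxList,
      signsOf, lastVec]

theorem pathOf_signsOf (h0 : 0 < a 0) (ha : StrictMono a) {l : List (Fin (n + 2) → ℝ)}
    (hl : IsMonoPath n a l) : pathOf (signsOf l) = l := by
  obtain ⟨hhead, hlast, hvert, hchain⟩ := hl
  have hsorted : l.Pairwise (fun u v => phi n a u < phi n a v) :=
    List.pairwise_map.1 (List.isChain_iff_pairwise.1
      ((List.isChain_map (phi n a)).2 (hchain.imp fun _ _ => And.left)))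
  have : Std.Irrefl (fun u v : Fin (n + 2) → ℝ => phi n a u < phi n a v) :=
    ⟨fun _ => lt_irrefl _⟩
  have : Std.Antisymm (fun u v : Fin (n + 2) → ℝ => phi n a u < phi n a v) :=
    ⟨fun _ _ h h' => (lt_asymm h h').elim⟩
  have hfirst : -lastVec n ∈ l := List.mem_of_mem_head? hhead
  have hlast' : lastVec n ∈ l := List.mem_of_mem_getLast? hlast
  refine (pairwise_phi_lt_pathOf h0 ha _).eq_of_mem_iff hsorted
    fun v => ⟨fun hv => ?_, fun hv => ?_⟩
  · exact (mem_pathOf_signsOf_iff hfirst hlast' (isCPVertex_of_mem_pathOf hv)).1 hv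
  · exact (mem_pathOf_signsOf_iff hfirst hlast' (hvert v hv)).2 hv

end Decoding

/-- The total number of `φ`-monotone paths on the cross-polytope
`◇^{n+2}` is `(2^{2(n+2)-1} - 2)/3`. -/
theorem card_monotone_paths (n : ℕ) (a : Fin (n + 2) → ℝ)
    (h0 : 0 < a 0) (ha : StrictMono a) :
    Set.ncard {l : List (Fin (n + 2) → ℝ) | IsMonoPath n a l} =
      (2 ^ (2 * (n + 2) - 1) - 2) / 3 := by
  have hpaths : {l | IsMonoPath n a l} = pathOf '' {s | Admissible s} := by
    ext l
    refine ⟨fun hl => ⟨signsOf l, ?_, pathOf_signsOf h0 ha hl⟩, ?_⟩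
    · rw [Set.mem_ofPred_eq, ← isMonoPath_pathOf_iff h0 ha, pathOf_signsOf h0 ha hl]
      exact hl
    · rintro ⟨s, hs, rfl⟩
      exact (isMonoPath_pathOf_iff h0 ha).2 hs
  have hpow : 2 ^ (2 * (n + 2) - 1) = 2 * 4 ^ (n + 1) := by
    rw [show 2 * (n + 2) - 1 = 2 * (n + 1) + 1 by omega, pow_succ, pow_mul]
    ring
  rw [hpaths, Set.ncard_image_of_injective _ pathOf_injective, Set.ncard_eq_toFinset_card',
    Set.toFinset_ofPred, ← Fintype.card_subtype, hpow]
  have := card_admissible (n + 1)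
  omega
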